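/- arXiv:2305.01414 — 2 statements merged into one kernel-verified Lean document; each statement's English description precedes it below -/
import Mathlib

section
/- Suppose at a point α > 0, ∂tα > 0, and (∂xα)² < (∂tα)². With κ = α/((∂xα)² − (∂tα)²), h1, h2 as above, ê = −κ(∂tα h1 − 2∂xα h2) and p̂ = κ(∂xα h1 − 2∂tα h2), we have |p̂| ≤ ê. -/
open Real

noncomputable def pt (f : ℝ → ℝ → ℝ) (t x : ℝ) : ℝ := deriv (fun s => f s x) t

noncomputable def px (f : ℝ → ℝ → ℝ) (t x : ℝ) : ℝ := deriv (fun y => f t y) x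

/-- the energy density dominates the momentum density:
`|p̂| ≤ ê` at points where `α > 0`, `∂tα > 0` and `(∂xα)² < (∂tα)²`. -/
theorem abs_momentum_le_energy
    (Λ φ α : ℝ → ℝ → ℝ)
    (hΛt : ∀ x, Differentiable ℝ (fun t => Λ t x))
    (hΛx : ∀ t, Differentiable ℝ (fun x => Λ t x))
    (hφt : ∀ x, Differentiable ℝ (fun t => φ t x))
    (hφx : ∀ t, Differentiable ℝ (fun x => φ t x))
    (hαt : ∀ x, Differentiable ℝ (fun t => α t x))
    (hαx : ∀ t, Differentiable ℝ (fun x => α t x))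
    (t x : ℝ)
    (hpos : 0 < α t x)
    (hdt : 0 < pt α t x)
    (htl : (px α t x) ^ 2 < (pt α t x) ^ 2) :
    let κ := α t x / ((px α t x) ^ 2 - (pt α t x) ^ 2)
    let h1 := (pt Λ t x) ^ 2 + (px Λ t x) ^ 2
        + 4 * Real.sinh (Λ t x) ^ 2 * ((pt φ t x) ^ 2 + (px φ t x) ^ 2)
    let h2 := pt Λ t x * px Λ t x
        + 4 * Real.sinh (Λ t x) ^ 2 * (pt φ t x * px φ t x)
    |κ * (px α t x * h1 - 2 * pt α t x * h2)|
      ≤ -(κ * (pt α t x * h1 - 2 * px α t x * h2)) := by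
  intro κ h1 h2
  set a := pt α t x with ha
  set b := px α t x with hb
  set L1 := pt Λ t x
  set L2 := px Λ t x
  set S := Real.sinh (Λ t x)
  set f1 := pt φ t x
  set f2 := px φ t x
  have hκ : κ < 0 := div_neg_of_pos_of_neg hpos (by nlinarith)
  have hab1 : 0 < a + b := by nlinarith [sq_nonneg (a + b)]
  have hab2 : 0 < a - b := by nlinarith [sq_nonneg (a - b)]
  have hp : 0 ≤ h1 + 2 * h2 := by
    have := sq_nonneg (L1 + L2)
    have := sq_nonneg (f1 + f2)
    have := sq_nonneg (S * (f1 + f2))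
    simp only [h1, h2]; nlinarith
  have hm : 0 ≤ h1 - 2 * h2 := by
    have := sq_nonneg (L1 - L2)
    have := sq_nonneg (S * (f1 - f2))
    simp only [h1, h2]; nlinarith
  rw [abs_le]
  constructor
  · nlinarith [mul_nonpos_of_nonpos_of_nonneg hκ.le
      (mul_nonneg hab2.le hp)]
  · nlinarith [mul_nonpos_of_nonpos_of_nonneg hκ.le
      (mul_nonneg hab1.le hm)]
end

section
/- Suppose Λ, φ, α : ℝ² → ℝ are C² and satisfy: ∂t(α ∂tΛ) − ∂x(α ∂xΛ) = 2α sinh(2Λ)((∂tφ)² − (∂xφ)²), ∂t(α sinh²Λ ∂tφ) − ∂x(α sinh²Λ ∂xφ) = 0, and ∂t²α − ∂x²α = 0, with α > 0 and (∂xα)² ≠ (∂tα)² everywhere. Define κ = α/((∂xα)² − (∂tα)²), h1 = (∂xα)²/α² + (∂tα)²/α² + (∂tΛ)² + (∂xΛ)² + 4sinh²Λ((∂tφ)² + (∂xφ)²), h2 = ∂xα∂tα/α² + ∂tΛ∂xΛ + 4sinh²Λ ∂tφ∂xφ, e = κ(∂tα · h1 − 2∂xα · h2), p = κ(∂xα ·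 h1 − 2∂tα · h2). Then ∂t p + ∂x e = 0. -/
open Real

/-- κ = α / ((∂xα)² − (∂tα)²). -/
noncomputable def kap (α : ℝ → ℝ → ℝ) (t x : ℝ) : ℝ :=
  α t x / ((px α t x) ^ 2 - (pt α t x) ^ 2)

/-- h₁ density (full version, including the α-terms). -/
noncomputable def h1 (Λ φ α : ℝ → ℝ → ℝ) (t x : ℝ) : ℝ :=
  (px α t x) ^ 2 / (α t x) ^ 2 + (pt α t x) ^ 2 / (α t x) ^ 2
    + (pt Λ t x) ^ 2 + (px Λ t x) ^ 2
    + 4 * Real.sinh (Λ t x) ^ 2 * ((pt φ t x) ^ 2 + (px φ t x) ^ 2)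

/-- h₂ density (full version, including the α-term). -/
noncomputable def h2 (Λ φ α : ℝ → ℝ → ℝ) (t x : ℝ) : ℝ :=
  px α t x * pt α t x / (α t x) ^ 2 + pt Λ t x * px Λ t x
    + 4 * Real.sinh (Λ t x) ^ 2 * (pt φ t x * px φ t x)

/-- Energy density `e = κ(∂tα h₁ − 2 ∂xα h₂)`. -/
noncomputable def eDen (Λ φ α : ℝ → ℝ → ℝ) (t x : ℝ) : ℝ :=
  kap α t x * (pt α t x * h1 Λ φ α t x - 2 * px α t x * h2 Λ φ α t x)

/-- Momentum density `p = κ(∂xα h₁ − 2 ∂tα h₂)`. -/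
noncomputable def pDen (Λ φ α : ℝ → ℝ → ℝ) (t x : ℝ) : ℝ :=
  kap α t x * (px α t x * h1 Λ φ α t x - 2 * pt α t x * h2 Λ φ α t x)

/-!
Put `U = α h₁`, `V = 2 α h₂` and `D = (∂ₓα)² - (∂ₜα)²`, so that `p = (∂ₓα U - ∂ₜα V) / D` and
`e = (∂ₜα U - ∂ₓα V) / D`. Because `∂ₜ²α = ∂ₓ²α`, the second derivatives of `α` drop out of
`∂ₜp + ∂ₓe`, which equals `(∂ₓα (∂ₜU - ∂ₓV) + ∂ₜα (∂ₓU - ∂ₜV)) / D`.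

The function `ψ = log α` also solves `∂ₜ(α ∂ₜψ) - ∂ₓ(α ∂ₓψ) = 0`, because `α ∂ₜψ = ∂ₜα`. So
`U` and `V` are the energy and momentum densities of the wave map `(ψ, Λ, φ)` with weight `α`.
The target metric is `dψ² + dΛ² + 4 sinh²Λ dφ²`. For one field `u` with weight `w`, the
energy identity gives `∂ₜ(energy) - ∂ₓ(momentum) = -∂ₜw (u_t² - u_x²) + 2 u_t · (wave operator)`.
Sum these identities over the three fields. The `Λ`-derivative of the weight `sinh²Λ` cancels
against the source term of the `Λ` equation. This leaves `∂ₜU - ∂ₓV = -∂ₜα Q` and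
`∂ₓU - ∂ₜV = ∂ₓα Q` with one common Lagrangian `Q`, so the numerator above vanishes.
-/

open Function

section PartialDerivatives

variable {f : ℝ → ℝ → ℝ} {t x : ℝ}

theorem hasDerivAt_pt (hf : DifferentiableAt ℝ (uncurry f) (t, x)) :
    HasDerivAt (fun s => f s x) (pt f t x) t :=
  DifferentiableAt.hasDerivAt (f := fun s => f s x)
    (DifferentiableAt.comp (g := uncurry f) (f := fun s => (s, x)) t hf
      (differentiableAt_id.prodMk (differentiableAt_const x)))

theorem hasDerivAt_px (hf : DifferentiableAt ℝ (uncurry f) (t, x)) :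
    HasDerivAt (fun y => f t y) (px f t x) x :=
  DifferentiableAt.hasDerivAt (f := fun y => f t y)
    (DifferentiableAt.comp (g := uncurry f) (f := fun y => (t, y)) x hf
      ((differentiableAt_const t).prodMk differentiableAt_id))

theorem pt_eq_fderiv (hf : DifferentiableAt ℝ (uncurry f) (t, x)) :
    pt f t x = fderiv ℝ (uncurry f) (t, x) (1, 0) := by
  have hline : HasDerivAt (fun s : ℝ => (s, x)) ((1 : ℝ), (0 : ℝ)) t :=
    (hasDerivAt_id t).prodMk (hasDerivAt_const t x)
  exact (hf.hasFDerivAt.comp_hasDerivAt t hline).deriv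

theorem px_eq_fderiv (hf : DifferentiableAt ℝ (uncurry f) (t, x)) :
    px f t x = fderiv ℝ (uncurry f) (t, x) (0, 1) := by
  have hline : HasDerivAt (fun y : ℝ => (t, y)) ((0 : ℝ), (1 : ℝ)) x :=
    (hasDerivAt_const x t).prodMk (hasDerivAt_id x)
  exact (hf.hasFDerivAt.comp_hasDerivAt x hline).deriv

theorem uncurry_pt_eq_fderiv (hf : Differentiable ℝ (uncurry f)) :
    uncurry (pt f) = fun p => fderiv ℝ (uncurry f) p (1, 0) :=
  funext fun _ => pt_eq_fderiv (hf _)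

theorem uncurry_px_eq_fderiv (hf : Differentiable ℝ (uncurry f)) :
    uncurry (px f) = fun p => fderiv ℝ (uncurry f) p (0, 1) :=
  funext fun _ => px_eq_fderiv (hf _)

section ContDiff

variable {m n : WithTop ℕ∞}

theorem ContDiff.uncurry_pt (hf : ContDiff ℝ n (uncurry f)) (hmn : m + 1 ≤ n) :
    ContDiff ℝ m (uncurry (pt f)) := by
  rw [uncurry_pt_eq_fderiv (hf.differentiable (by rintro rfl; simp at hmn))]
  exact (hf.fderiv_right hmn).clm_apply contDiff_const

theorem ContDiff.uncurry_px (hf : ContDiff ℝ n (uncurry f)) (hmn : m + 1 ≤ n) :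
    ContDiff ℝ m (uncurry (px f)) := by
  rw [uncurry_px_eq_fderiv (hf.differentiable (by rintro rfl; simp at hmn))]
  exact (hf.fderiv_right hmn).clm_apply contDiff_const

end ContDiff

theorem ContDiff.differentiable_uncurry_pt (hf : ContDiff ℝ 2 (uncurry f)) :
    Differentiable ℝ (uncurry (pt f)) :=
  (hf.uncurry_pt (m := 1) (by norm_num)).differentiable (by norm_num)

theorem ContDiff.differentiable_uncurry_px (hf : ContDiff ℝ 2 (uncurry f)) :
    Differentiable ℝ (uncurry (px f)) :=
  (hf.uncurry_px (m := 1) (by norm_num)).differentiable (by norm_num)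

theorem pt_px_comm (hf : ContDiff ℝ 2 (uncurry f)) : pt (px f) t x = px (pt f) t x := by
  have hd : Differentiable ℝ (uncurry f) := hf.differentiable (by norm_num)
  have hd2 : DifferentiableAt ℝ (fderiv ℝ (uncurry f)) (t, x) :=
    (hf.fderiv_right (m := 1) (by norm_num)).differentiable (by norm_num) _
  rw [pt_eq_fderiv (hf.differentiable_uncurry_px _), px_eq_fderiv (hf.differentiable_uncurry_pt _),
    uncurry_pt_eq_fderiv hd, uncurry_px_eq_fderiv hd,
    fderiv_clm_apply hd2 (differentiableAt_const _), fderiv_clm_apply hd2 (differentiableAt_const _)]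
  simpa using (hf.contDiffAt.isSymmSndFDerivAt (by simp)) (1, 0) (0, 1)

theorem pt_log (hf : DifferentiableAt ℝ (uncurry f) (t, x)) (hf0 : f t x ≠ 0) :
    pt (fun t x => Real.log (f t x)) t x = pt f t x / f t x :=
  ((hasDerivAt_pt hf).log hf0).deriv

theorem px_log (hf : DifferentiableAt ℝ (uncurry f) (t, x)) (hf0 : f t x ≠ 0) :
    px (fun t x => Real.log (f t x)) t x = px f t x / f t x :=
  ((hasDerivAt_px hf).log hf0).deriv

theorem ContDiff.uncurry_log {n : WithTop ℕ∞} (hf : ContDiff ℝ n (uncurry f))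
    (hf0 : ∀ t x, f t x ≠ 0) : ContDiff ℝ n (uncurry fun t x => Real.log (f t x)) :=
  hf.log fun p => hf0 p.1 p.2

end PartialDerivatives

noncomputable section WeightedWaveEquation

variable (w u : ℝ → ℝ → ℝ)

def energyDensity (t x : ℝ) : ℝ := w t x * (pt u t x ^ 2 + px u t x ^ 2)

def momentumDensity (t x : ℝ) : ℝ := 2 * w t x * (pt u t x * px u t x)

def waveOp (t x : ℝ) : ℝ :=
  pt (fun t x => w t x * pt u t x) t x - px (fun t x => w t x * px u t x) t x

variable {w u}

theorem differentiable_energyDensity (hw : Differentiable ℝ (uncurry w))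
    (hu : ContDiff ℝ 2 (uncurry u)) : Differentiable ℝ (uncurry (energyDensity w u)) :=
  hw.mul ((hu.differentiable_uncurry_pt.pow 2).add (hu.differentiable_uncurry_px.pow 2))

theorem differentiable_momentumDensity (hw : Differentiable ℝ (uncurry w))
    (hu : ContDiff ℝ 2 (uncurry u)) : Differentiable ℝ (uncurry (momentumDensity w u)) :=
  (hw.const_mul 2).mul (hu.differentiable_uncurry_pt.mul hu.differentiable_uncurry_px)

theorem energyDensity_balance (hw : Differentiable ℝ (uncurry w))
    (hu : ContDiff ℝ 2 (uncurry u)) (t x : ℝ) :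
    pt (energyDensity w u) t x - px (momentumDensity w u) t x =
        -pt w t x * (pt u t x ^ 2 - px u t x ^ 2) + 2 * pt u t x * waveOp w u t x ∧
      px (energyDensity w u) t x - pt (momentumDensity w u) t x =
        px w t x * (pt u t x ^ 2 - px u t x ^ 2) - 2 * px u t x * waveOp w u t x := by
  have hw_t := hasDerivAt_pt (hw (t, x))
  have hw_x := hasDerivAt_px (hw (t, x))
  have hut_t := hasDerivAt_pt (hu.differentiable_uncurry_pt (t, x))
  have hut_x := hasDerivAt_px (hu.differentiable_uncurry_pt (t, x))
  have hux_t := hasDerivAt_pt (hu.differentiable_uncurry_px (t, x))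
  have hux_x := hasDerivAt_px (hu.differentiable_uncurry_px (t, x))
  rw [waveOp, show pt (energyDensity w u) t x = _ from
      (hw_t.fun_mul ((hut_t.fun_pow 2).fun_add (hux_t.fun_pow 2))).deriv,
    show px (energyDensity w u) t x = _ from
      (hw_x.fun_mul ((hut_x.fun_pow 2).fun_add (hux_x.fun_pow 2))).deriv,
    show pt (momentumDensity w u) t x = _ from
      ((hw_t.const_mul 2).fun_mul (hut_t.fun_mul hux_t)).deriv,
    show px (momentumDensity w u) t x = _ from
      ((hw_x.const_mul 2).fun_mul (hut_x.fun_mul hux_x)).deriv,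
    show pt (fun t x => w t x * pt u t x) t x = _ from (hw_t.fun_mul hut_t).deriv,
    show px (fun t x => w t x * px u t x) t x = _ from (hw_x.fun_mul hux_x).deriv,
    pt_px_comm hu]
  push_cast
  constructor <;> ring

theorem waveOp_log (hw : Differentiable ℝ (uncurry w)) (hw0 : ∀ t x, w t x ≠ 0) (t x : ℝ) :
    waveOp w (fun t x => Real.log (w t x)) t x = pt (pt w) t x - px (px w) t x := by
  have h_t : (fun t x => w t x * pt (fun t x => Real.log (w t x)) t x) = pt w := by
    ext t x
    rw [pt_log (hw _) (hw0 t x)]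
    field_simp [hw0 t x]
  have h_x : (fun t x => w t x * px (fun t x => Real.log (w t x)) t x) = px w := by
    ext t x
    rw [px_log (hw _) (hw0 t x)]
    field_simp [hw0 t x]
  rw [waveOp, h_t, h_x]

end WeightedWaveEquation

noncomputable section Flux

variable (a U V : ℝ → ℝ → ℝ)

def modifiedMomentum (t x : ℝ) : ℝ :=
  (px a t x * U t x - pt a t x * V t x) / (px a t x ^ 2 - pt a t x ^ 2)

def modifiedEnergy (t x : ℝ) : ℝ :=
  (pt a t x * U t x - px a t x * V t x) / (px a t x ^ 2 - pt a t x ^ 2)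

variable {a U V} {t x : ℝ}

theorem pt_modifiedMomentum_add_px_modifiedEnergy (ha : ContDiff ℝ 2 (uncurry a))
    (hU : DifferentiableAt ℝ (uncurry U) (t, x)) (hV : DifferentiableAt ℝ (uncurry V) (t, x))
    (hwave : pt (pt a) t x = px (px a) t x) (hD : px a t x ^ 2 - pt a t x ^ 2 ≠ 0) :
    pt (modifiedMomentum a U V) t x + px (modifiedEnergy a U V) t x =
      (px a t x * (pt U t x - px V t x) + pt a t x * (px U t x - pt V t x)) /
        (px a t x ^ 2 - pt a t x ^ 2) := by
  have hat_t := hasDerivAt_pt (ha.differentiable_uncurry_pt (t, x))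
  have hat_x := hasDerivAt_px (ha.differentiable_uncurry_pt (t, x))
  have hax_t := hasDerivAt_pt (ha.differentiable_uncurry_px (t, x))
  have hax_x := hasDerivAt_px (ha.differentiable_uncurry_px (t, x))
  rw [show pt (modifiedMomentum a U V) t x = _ from
      (((hax_t.fun_mul (hasDerivAt_pt hU)).fun_sub (hat_t.fun_mul (hasDerivAt_pt hV))).fun_div
        ((hax_t.fun_pow 2).fun_sub (hat_t.fun_pow 2)) hD).deriv,
    show px (modifiedEnergy a U V) t x = _ from
      (((hat_x.fun_mul (hasDerivAt_px hU)).fun_sub (hax_x.fun_mul (hasDerivAt_px hV))).fun_div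
        ((hax_x.fun_pow 2).fun_sub (hat_x.fun_pow 2)) hD).deriv,
    pt_px_comm ha, hwave]
  field_simp
  ring

end Flux

noncomputable section ReducedEinstein

variable (Λ φ α : ℝ → ℝ → ℝ)

def warpedWeight (t x : ℝ) : ℝ := α t x * Real.sinh (Λ t x) ^ 2

def totalEnergyDensity (t x : ℝ) : ℝ := α t x * h1 Λ φ α t x

def totalMomentumDensity (t x : ℝ) : ℝ := 2 * α t x * h2 Λ φ α t x

def totalLagrangian (t x : ℝ) : ℝ :=
  (pt α t x / α t x) ^ 2 - (px α t x / α t x) ^ 2 + pt Λ t x ^ 2 - px Λ t x ^ 2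
    + 4 * Real.sinh (Λ t x) ^ 2 * (pt φ t x ^ 2 - px φ t x ^ 2)

variable {Λ φ α}

theorem pDen_eq_modifiedMomentum :
    pDen Λ φ α = modifiedMomentum α (totalEnergyDensity Λ φ α) (totalMomentumDensity Λ φ α) := by
  ext t x
  simp only [pDen, kap, modifiedMomentum, totalEnergyDensity, totalMomentumDensity]
  ring

theorem eDen_eq_modifiedEnergy :
    eDen Λ φ α = modifiedEnergy α (totalEnergyDensity Λ φ α) (totalMomentumDensity Λ φ α) := by
  ext t x
  simp only [eDen, kap, modifiedEnergy, totalEnergyDensity, totalMomentumDensity]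
  ring

theorem differentiable_warpedWeight (hΛ : Differentiable ℝ (uncurry Λ))
    (hα : Differentiable ℝ (uncurry α)) : Differentiable ℝ (uncurry (warpedWeight Λ α)) :=
  hα.mul (hΛ.sinh.pow 2)

theorem pt_warpedWeight (hΛ : Differentiable ℝ (uncurry Λ)) (hα : Differentiable ℝ (uncurry α))
    (t x : ℝ) : pt (warpedWeight Λ α) t x =
      pt α t x * Real.sinh (Λ t x) ^ 2 + α t x * Real.sinh (2 * Λ t x) * pt Λ t x := by
  refine ((hasDerivAt_pt (hα _)).fun_mul ((hasDerivAt_pt (hΛ _)).sinh.fun_pow 2)).deriv.trans ?_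
  rw [Real.sinh_two_mul]
  push_cast
  ring

theorem px_warpedWeight (hΛ : Differentiable ℝ (uncurry Λ)) (hα : Differentiable ℝ (uncurry α))
    (t x : ℝ) : px (warpedWeight Λ α) t x =
      px α t x * Real.sinh (Λ t x) ^ 2 + α t x * Real.sinh (2 * Λ t x) * px Λ t x := by
  refine ((hasDerivAt_px (hα _)).fun_mul ((hasDerivAt_px (hΛ _)).sinh.fun_pow 2)).deriv.trans ?_
  rw [Real.sinh_two_mul]
  push_cast
  ring

theorem totalEnergyDensity_eq (hα : Differentiable ℝ (uncurry α)) (hα0 : ∀ t x, α t x ≠ 0) :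
    totalEnergyDensity Λ φ α = fun t x => energyDensity α (fun t x => Real.log (α t x)) t x
      + energyDensity α Λ t x + 4 * energyDensity (warpedWeight Λ α) φ t x := by
  ext t x
  simp only [totalEnergyDensity, h1, energyDensity, warpedWeight, pt_log (hα _) (hα0 t x),
    px_log (hα _) (hα0 t x)]
  field_simp [hα0 t x]
  ring

theorem totalMomentumDensity_eq (hα : Differentiable ℝ (uncurry α)) (hα0 : ∀ t x, α t x ≠ 0) :
    totalMomentumDensity Λ φ α = fun t x => momentumDensity α (fun t x => Real.log (α t x)) t x
      + momentumDensity α Λ t x + 4 * momentumDensity (warpedWeight Λ α) φ t x := by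
  ext t x
  simp only [totalMomentumDensity, h2, momentumDensity, warpedWeight, pt_log (hα _) (hα0 t x),
    px_log (hα _) (hα0 t x)]
  field_simp [hα0 t x]

theorem differentiable_totalEnergyDensity (hΛ : ContDiff ℝ 2 (uncurry Λ))
    (hφ : ContDiff ℝ 2 (uncurry φ)) (hα : ContDiff ℝ 2 (uncurry α)) (hα0 : ∀ t x, α t x ≠ 0) :
    Differentiable ℝ (uncurry (totalEnergyDensity Λ φ α)) := by
  have hα' := hα.differentiable two_ne_zero
  rw [totalEnergyDensity_eq hα' hα0]
  exact ((differentiable_energyDensity hα' (hα.uncurry_log hα0)).add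
    (differentiable_energyDensity hα' hΛ)).add ((differentiable_energyDensity
      (differentiable_warpedWeight (hΛ.differentiable two_ne_zero) hα') hφ).const_mul 4)

theorem differentiable_totalMomentumDensity (hΛ : ContDiff ℝ 2 (uncurry Λ))
    (hφ : ContDiff ℝ 2 (uncurry φ)) (hα : ContDiff ℝ 2 (uncurry α)) (hα0 : ∀ t x, α t x ≠ 0) :
    Differentiable ℝ (uncurry (totalMomentumDensity Λ φ α)) := by
  have hα' := hα.differentiable two_ne_zero
  rw [totalMomentumDensity_eq hα' hα0]
  exact ((differentiable_momentumDensity hα' (hα.uncurry_log hα0)).add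
    (differentiable_momentumDensity hα' hΛ)).add ((differentiable_momentumDensity
      (differentiable_warpedWeight (hΛ.differentiable two_ne_zero) hα') hφ).const_mul 4)

theorem totalEnergyDensity_balance (hΛ : ContDiff ℝ 2 (uncurry Λ)) (hφ : ContDiff ℝ 2 (uncurry φ))
    (hα : ContDiff ℝ 2 (uncurry α)) (hα0 : ∀ t x, α t x ≠ 0) {t x : ℝ}
    (heqΛ : waveOp α Λ t x = 2 * α t x * Real.sinh (2 * Λ t x) * (pt φ t x ^ 2 - px φ t x ^ 2))
    (heqφ : waveOp (warpedWeight Λ α) φ t x = 0) (heqα : pt (pt α) t x = px (px α) t x) :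
    pt (totalEnergyDensity Λ φ α) t x - px (totalMomentumDensity Λ φ α) t x =
        -pt α t x * totalLagrangian Λ φ α t x ∧
      px (totalEnergyDensity Λ φ α) t x - pt (totalMomentumDensity Λ φ α) t x =
        px α t x * totalLagrangian Λ φ α t x := by
  have hα' := hα.differentiable two_ne_zero
  have hΛ' := hΛ.differentiable two_ne_zero
  have hψ := hα.uncurry_log hα0
  have hw := differentiable_warpedWeight hΛ' hα'
  obtain ⟨hψ_t, hψ_x⟩ := energyDensity_balance hα' hψ t x
  obtain ⟨hΛ_t, hΛ_x⟩ := energyDensity_balance hα' hΛ t x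
  obtain ⟨hφ_t, hφ_x⟩ := energyDensity_balance hw hφ t x
  rw [waveOp_log hα' hα0, heqα, pt_log (hα' _) (hα0 t x), px_log (hα' _) (hα0 t x)]
    at hψ_t hψ_x
  rw [heqΛ] at hΛ_t hΛ_x
  rw [heqφ, pt_warpedWeight hΛ' hα'] at hφ_t
  rw [heqφ, px_warpedWeight hΛ' hα'] at hφ_x
  have hEψ := differentiable_energyDensity hα' hψ (t, x)
  have hEΛ := differentiable_energyDensity hα' hΛ (t, x)
  have hEφ := differentiable_energyDensity hw hφ (t, x)
  have hMψ := differentiable_momentumDensity hα' hψ (t, x)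
  have hMΛ := differentiable_momentumDensity hα' hΛ (t, x)
  have hMφ := differentiable_momentumDensity hw hφ (t, x)
  rw [totalEnergyDensity_eq hα' hα0, totalMomentumDensity_eq hα' hα0,
    show pt (fun t x => _ + _ + 4 * _) t x = _ from (((hasDerivAt_pt hEψ).fun_add
      (hasDerivAt_pt hEΛ)).fun_add ((hasDerivAt_pt hEφ).const_mul 4)).deriv,
    show px (fun t x => _ + _ + 4 * _) t x = _ from (((hasDerivAt_px hEψ).fun_add
      (hasDerivAt_px hEΛ)).fun_add ((hasDerivAt_px hEφ).const_mul 4)).deriv,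
    show pt (fun t x => _ + _ + 4 * _) t x = _ from (((hasDerivAt_pt hMψ).fun_add
      (hasDerivAt_pt hMΛ)).fun_add ((hasDerivAt_pt hMφ).const_mul 4)).deriv,
    show px (fun t x => _ + _ + 4 * _) t x = _ from (((hasDerivAt_px hMψ).fun_add
      (hasDerivAt_px hMΛ)).fun_add ((hasDerivAt_px hMφ).const_mul 4)).deriv]
  unfold totalLagrangian
  constructor
  · linear_combination hψ_t + hΛ_t + 4 * hφ_t
  · linear_combination hψ_x + hΛ_x + 4 * hφ_x

end ReducedEinstein

/-- first modified continuity equation `∂t p + ∂x e = 0`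
for solutions of the reduced Einstein system. -/
theorem continuity_equation_one
    (Λ φ α : ℝ → ℝ → ℝ)
    (hΛ : ContDiff ℝ 2 (fun p : ℝ × ℝ => Λ p.1 p.2))
    (hφ : ContDiff ℝ 2 (fun p : ℝ × ℝ => φ p.1 p.2))
    (hα : ContDiff ℝ 2 (fun p : ℝ × ℝ => α p.1 p.2))
    (heqΛ : ∀ t x,
      pt (fun t x => α t x * pt Λ t x) t x
        - px (fun t x => α t x * px Λ t x) t x
      = 2 * α t x * Real.sinh (2 * Λ t x) * ((pt φ t x) ^ 2 - (px φ t x) ^ 2))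
    (heqφ : ∀ t x,
      pt (fun t x => α t x * Real.sinh (Λ t x) ^ 2 * pt φ t x) t x
        - px (fun t x => α t x * Real.sinh (Λ t x) ^ 2 * px φ t x) t x = 0)
    (heqα : ∀ t x, pt (pt α) t x - px (px α) t x = 0)
    (hpos : ∀ t x, 0 < α t x)
    (hne : ∀ t x, (px α t x) ^ 2 ≠ (pt α t x) ^ 2) :
    ∀ t x, pt (pDen Λ φ α) t x + px (eDen Λ φ α) t x = 0 := by
  intro t x
  have hα0 : ∀ t x, α t x ≠ 0 := fun t x => (hpos t x).ne'
  have hwave : pt (pt α) t x = px (px α) t x := sub_eq_zero.mp (heqα t x)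
  obtain ⟨hbal_t, hbal_x⟩ :=
    totalEnergyDensity_balance hΛ hφ hα hα0 (heqΛ t x) (heqφ t x) hwave
  rw [pDen_eq_modifiedMomentum, eDen_eq_modifiedEnergy,
    pt_modifiedMomentum_add_px_modifiedEnergy hα
      (differentiable_totalEnergyDensity hΛ hφ hα hα0 _)
      (differentiable_totalMomentumDensity hΛ hφ hα hα0 _) hwave (sub_ne_zero.mpr (hne t x)),
    hbal_t, hbal_x]
  ring
end
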